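/- (Flocking Lyapunov function for heavy-tailed kernels) Let D, δ : [0, ∞) → ℝ be nonnegative differentiable functions satisfying δ'(t) ≤ -K⟨D(t)⟩^{-θ} δ(t) and D'(t) ≤ δ(t), where K > 0, θ ∈ (0,1), and ⟨r⟩ := (1 + r²)^{1/2}. Then H(t) := K⟨D(t)⟩^{1-θ}/(1-θ) + δ(t) is non-increasing; consequently D(t) is uniformly bounded: ⟨D(t)⟩^{1-θ} ≤ ⟨D(0)⟩^{1-θ} + (1-θ)δ(0)/K for all t ≥ 0. -/

import Mathlib

/-!
The derivative of `⟨D⟩^{1-θ}` is `(1-θ) ⟨D⟩^{-θ} (D/⟨D⟩) D'`, and since `0 ≤ D/⟨D⟩ ≤ 1` the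
factor `(D/⟨D⟩) D'` is at most `δ`. Hence the growth of `K⟨D⟩^{1-θ}/(1-θ)` is at most
`K⟨D⟩^{-θ} δ`, which the decay of `δ` compensates, so `H` is non-increasing. The bound on `D`
follows from `H(t) ≤ H(0)` and `δ(t) ≥ 0`.
-/

/-- The "Japanese bracket" `⟨r⟩ = (1 + r²)^{1/2}`. -/
noncomputable def jap (r : ℝ) : ℝ := Real.sqrt (1 + r ^ 2)

open Set

lemma jap_pos (r : ℝ) : 0 < jap r :=
  Real.sqrt_pos.mpr (by positivity)

lemma abs_le_jap (r : ℝ) : |r| ≤ jap r := by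
  rw [← Real.sqrt_sq_eq_abs]
  exact Real.sqrt_le_sqrt (by linarith)

lemma div_jap_mul_le {r x y : ℝ} (hr : 0 ≤ r) (hxy : x ≤ y) (hy : 0 ≤ y) :
    r / jap r * x ≤ y := by
  have hc₀ : 0 ≤ r / jap r := div_nonneg hr (jap_pos r).le
  have hc₁ : r / jap r ≤ 1 :=
    (div_le_one (jap_pos r)).mpr ((le_abs_self r).trans (abs_le_jap r))
  rcases le_total x 0 with hx | hx
  · exact (mul_nonpos_of_nonneg_of_nonpos hc₀ hx).trans hy
  · exact (mul_le_of_le_one_left hx hc₁).trans hxy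

theorem HasDerivAt.jap {f : ℝ → ℝ} {f' x : ℝ} (hf : HasDerivAt f f' x) :
    HasDerivAt (fun s => _root_.jap (f s)) (f x / _root_.jap (f x) * f') x := by
  have hsq := ((hf.pow 2).const_add 1).sqrt (by positivity : 1 + f x ^ 2 ≠ 0)
  refine hsq.congr_deriv ?_
  have hj : √(1 + f x ^ 2) ≠ 0 := (jap_pos (f x)).ne'
  rw [_root_.jap, Pi.pow_apply]
  field_simp
  push_cast
  ring

theorem HasDerivAt.jap_rpow {f : ℝ → ℝ} {f' x : ℝ} (p : ℝ) (hf : HasDerivAt f f' x) :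
    HasDerivAt (fun s => _root_.jap (f s) ^ p)
      (p * _root_.jap (f x) ^ (p - 1) * (f x / _root_.jap (f x) * f')) x :=
  (hf.jap.rpow_const (Or.inl (jap_pos (f x)).ne')).congr_deriv (by ring)

lemma antitoneOn_Ici_of_hasDerivAt_nonpos {f f' : ℝ → ℝ} {a : ℝ}
    (hf : ∀ x ≥ a, HasDerivAt f (f' x) x) (hf' : ∀ x ≥ a, f' x ≤ 0) :
    AntitoneOn f (Ici a) := by
  refine antitoneOn_of_hasDerivWithinAt_nonpos (f' := f') (convex_Ici a)
    (fun x hx => (hf x hx).continuousAt.continuousWithinAt) (fun x hx => ?_) (fun x hx => ?_)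
  · rw [interior_Ici] at hx
    exact (hf x hx.le).hasDerivWithinAt
  · rw [interior_Ici] at hx
    exact hf' x hx.le

noncomputable def flockingLyapunov (K θ : ℝ) (D δ : ℝ → ℝ) (t : ℝ) : ℝ :=
  K * jap (D t) ^ (1 - θ) / (1 - θ) + δ t

theorem hasDerivAt_flockingLyapunov {K θ D' δ' t : ℝ} {D δ : ℝ → ℝ} (hθ : θ ≠ 1)
    (hD : HasDerivAt D D' t) (hδ : HasDerivAt δ δ' t) :
    HasDerivAt (flockingLyapunov K θ D δ)
      (K * jap (D t) ^ (-θ) * (D t / jap (D t) * D') + δ') t := by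
  have h1θ : 1 - θ ≠ 0 := sub_ne_zero.mpr hθ.symm
  have hH : flockingLyapunov K θ D δ = fun s => K / (1 - θ) * jap (D s) ^ (1 - θ) + δ s := by
    funext s
    rw [flockingLyapunov, mul_div_right_comm, div_mul_eq_mul_div, mul_div_assoc]
  rw [hH]
  refine (((hD.jap_rpow (1 - θ)).const_mul (K / (1 - θ))).add hδ).congr_deriv ?_
  rw [sub_sub_cancel_left]
  field_simp

theorem antitoneOn_flockingLyapunov {K θ : ℝ} {D δ : ℝ → ℝ} (hK : 0 ≤ K) (hθ : θ ≠ 1)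
    (hD0 : ∀ t ≥ (0 : ℝ), 0 ≤ D t) (hδ0 : ∀ t ≥ (0 : ℝ), 0 ≤ δ t)
    (hDdiff : ∀ t ≥ (0 : ℝ), DifferentiableAt ℝ D t)
    (hδdiff : ∀ t ≥ (0 : ℝ), DifferentiableAt ℝ δ t)
    (hδ : ∀ t ≥ (0 : ℝ), deriv δ t ≤ -K * jap (D t) ^ (-θ) * δ t)
    (hD : ∀ t ≥ (0 : ℝ), deriv D t ≤ δ t) :
    AntitoneOn (flockingLyapunov K θ D δ) (Ici 0) := by
  refine antitoneOn_Ici_of_hasDerivAt_nonpos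
    (fun t ht => hasDerivAt_flockingLyapunov hθ (hDdiff t ht).hasDerivAt (hδdiff t ht).hasDerivAt)
    fun t ht => ?_
  have hweight : 0 ≤ K * jap (D t) ^ (-θ) :=
    mul_nonneg hK (Real.rpow_nonneg (jap_pos (D t)).le _)
  calc K * jap (D t) ^ (-θ) * (D t / jap (D t) * deriv D t) + deriv δ t
      ≤ K * jap (D t) ^ (-θ) * δ t + deriv δ t := by
        gcongr
        exact div_jap_mul_le (hD0 t ht) (hD t ht) (hδ0 t ht)
    _ ≤ 0 := by linarith [hδ t ht]

/-- Flocking Lyapunov function for heavy-tailed kernels: if `δ' ≤ -K⟨D⟩^{-θ} δ` and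
`D' ≤ δ`, with `K > 0`, `θ ∈ (0,1)`, then `H = K⟨D⟩^{1-θ}/(1-θ) + δ` is non-increasing,
and `⟨D(t)⟩^{1-θ} ≤ ⟨D(0)⟩^{1-θ} + (1-θ)δ(0)/K`. -/
theorem flocking_lyapunov (K θ : ℝ) (hK : 0 < K) (hθ : θ ∈ Set.Ioo (0 : ℝ) 1)
    (D δ : ℝ → ℝ)
    (hD0 : ∀ t ≥ (0 : ℝ), 0 ≤ D t) (hδ0 : ∀ t ≥ (0 : ℝ), 0 ≤ δ t)
    (hDdiff : ∀ t ≥ (0 : ℝ), DifferentiableAt ℝ D t)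
    (hδdiff : ∀ t ≥ (0 : ℝ), DifferentiableAt ℝ δ t)
    (hδ : ∀ t ≥ (0 : ℝ), deriv δ t ≤ -K * jap (D t) ^ (-θ) * δ t)
    (hD : ∀ t ≥ (0 : ℝ), deriv D t ≤ δ t) :
    (∀ s t : ℝ, 0 ≤ s → s ≤ t →
        K * jap (D t) ^ (1 - θ) / (1 - θ) + δ t
          ≤ K * jap (D s) ^ (1 - θ) / (1 - θ) + δ s) ∧
    ∀ t ≥ (0 : ℝ), jap (D t) ^ (1 - θ) ≤ jap (D 0) ^ (1 - θ) + (1 - θ) * δ 0 / K := by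
  have h1θ : 0 < 1 - θ := sub_pos.mpr hθ.2
  have hH := antitoneOn_flockingLyapunov hK.le hθ.2.ne hD0 hδ0 hDdiff hδdiff hδ hD
  refine ⟨fun s t hs hst => hH hs (hs.trans hst) hst, fun t ht => ?_⟩
  have hHt : flockingLyapunov K θ D δ t ≤ flockingLyapunov K θ D δ 0 := hH self_mem_Ici ht ht
  have hδt := hδ0 t ht
  unfold flockingLyapunov at hHt
  field_simp at hHt ⊢
  linarith [mul_nonneg h1θ.le hδt]
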